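/- Let d ≥ 1, let β₁, β₂, … ∈ (0,1), set ᾱ_T = ∏_{t=1}^{T} (1−β_t), and let x₀, x₀' ∈ ℝ^d with x₀ ≠ x₀'. For any measurable space 𝒴 and any Markov kernel κ from ℝ^d to 𝒴 (modeling the reverse denoising process composed with the classifier), KL( (N(√ᾱ_T·x₀, (1−ᾱ_T)·I_d)).bind κ ‖ (N(√ᾱ_T·x₀', (1−ᾱ_T)·I_d)).bind κ ) ≤ ᾱ_T·‖x₀ − x₀'‖₂² / (2·(1−ᾱ_T)), and the right-hand side is strictly decreasing in T. -/

import Mathlib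

open MeasureTheory ProbabilityTheory Real

/-- The Gaussian probability measure `N(m, σ² I_d)` on `ℝ^d`, given by its Lebesgue density. -/
noncomputable def gaussian (d : ℕ) (m : EuclideanSpace ℝ (Fin d)) (σ2 : ℝ) :
    Measure (EuclideanSpace ℝ (Fin d)) :=
  volume.withDensity fun x => ENNReal.ofReal
    ((2 * π * σ2) ^ (-(d : ℝ) / 2) * Real.exp (-‖x - m‖ ^ 2 / (2 * σ2)))

/-- The Kullback–Leibler divergence `KL(P‖Q) = ∫ log (dP/dQ) dP`. -/
noncomputable def KLdiv {X : Type*} [MeasurableSpace X] (P Q : Measure X) : ℝ :=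
  ∫ x, Real.log ((P.rnDeriv Q) x).toReal ∂P

/-!
Two Gaussians with common covariance `σ² I` and means `m₁`, `m₂` have log-likelihood ratio
`(‖x - m₂‖² - ‖x - m₁‖²) / (2σ²)`, an affine function of `x` whose mean under `N(m₁, σ² I)` is
`‖m₁ - m₂‖² / (2σ²)`. With `mᵢ = √ᾱ_T xᵢ` and `σ² = 1 - ᾱ_T` this is the bound, and the
data-processing inequality carries it through the kernel `κ`. The bound is `x ↦ c x / (2(1 - x))`,
increasing on `x < 1`, composed with the strictly decreasing `T ↦ ᾱ_T`.
-/

open InformationTheory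
open scoped RealInnerProductSpace

lemma KLdiv_eq_toReal_klDiv {X : Type*} [MeasurableSpace X] {P Q : Measure X}
    [IsFiniteMeasure P] [IsFiniteMeasure Q] (hPQ : P ≪ Q) (h_eq : P Set.univ = Q Set.univ) :
    KLdiv P Q = (klDiv P Q).toReal :=
  (toReal_klDiv_of_measure_eq hPQ h_eq).symm

lemma KLdiv_bind_le {X Y : Type*} [MeasurableSpace X] [MeasurableSpace Y]
    {P Q : Measure X} [IsProbabilityMeasure P] [IsProbabilityMeasure Q]
    (hPQ : P ≪ Q) (h_int : Integrable (llr P Q) P) (κ : Kernel X Y) [IsMarkovKernel κ] :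
    KLdiv (P.bind κ) (Q.bind κ) ≤ KLdiv P Q := by
  rw [KLdiv_eq_toReal_klDiv (hPQ.comp_right κ) (by simp),
    KLdiv_eq_toReal_klDiv hPQ (by simp)]
  exact ENNReal.toReal_mono (klDiv_ne_top hPQ h_int) (klDiv_comp_right_le P Q κ)

section GaussianIntegrals

variable {V : Type*} [NormedAddCommGroup V] [InnerProductSpace ℝ V] [FiniteDimensional ℝ V]
  [MeasurableSpace V] [BorelSpace V] {b : ℝ}

lemma integrable_exp_neg_mul_sq_norm_add_inner (hb : 0 < b) (w : V) :
    Integrable (fun x : V => rexp (-b * ‖x‖ ^ 2 + ⟪w, x⟫)) := by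
  refine (GaussianFourier.integrable_cexp_neg_mul_sq_norm_add (V := V) (b := b)
    (by simpa using hb) 1 w).norm.congr (ae_of_all _ fun x => ?_)
  simp [Complex.norm_exp, ← Complex.ofReal_pow]

lemma integrable_exp_neg_mul_sq_norm (hb : 0 < b) :
    Integrable (fun x : V => rexp (-b * ‖x‖ ^ 2)) := by
  simpa using integrable_exp_neg_mul_sq_norm_add_inner hb (0 : V)

lemma abs_le_exp_add_exp_neg (t : ℝ) : |t| ≤ rexp t + rexp (-t) :=
  abs_le.mpr ⟨by linarith [add_one_le_exp (-t), exp_pos t],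
    by linarith [add_one_le_exp t, exp_pos (-t)]⟩

lemma integrable_inner_mul_exp_neg_mul_sq_norm (hb : 0 < b) (w : V) :
    Integrable (fun x : V => ⟪w, x⟫ * rexp (-b * ‖x‖ ^ 2)) := by
  -- `|t| ≤ eᵗ + e⁻ᵗ` dominates the first moment by two Gaussians with a linear term
  refine ((integrable_exp_neg_mul_sq_norm_add_inner hb w).add
    (integrable_exp_neg_mul_sq_norm_add_inner hb (-w))).mono' (by fun_prop)
    (ae_of_all _ fun x => ?_)
  simp only [Pi.add_apply, inner_neg_left, exp_add, ← mul_add, norm_mul, Real.norm_eq_abs,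
    abs_of_pos (exp_pos _)]
  rw [mul_comm]
  exact mul_le_mul_of_nonneg_left (abs_le_exp_add_exp_neg _) (exp_pos _).le

lemma integral_inner_mul_exp_neg_mul_sq_norm (w : V) :
    ∫ x : V, ⟪w, x⟫ * rexp (-b * ‖x‖ ^ 2) = 0 := by
  have h := integral_neg_eq_self (fun x : V => ⟪w, x⟫ * rexp (-b * ‖x‖ ^ 2)) volume
  simp only [inner_neg_right, norm_neg, neg_mul, integral_neg] at h ⊢
  linarith

end GaussianIntegrals

section Gaussian

variable {d : ℕ} {σ2 : ℝ}

local notation "E" => EuclideanSpace ℝ (Fin d)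

noncomputable def gaussianDensity (σ2 : ℝ) (x : E) : ℝ :=
  (2 * π * σ2) ^ (-(d : ℝ) / 2) * rexp (-‖x‖ ^ 2 / (2 * σ2))

lemma gaussianDensity_eq (σ2 : ℝ) (x : E) :
    gaussianDensity σ2 x = (2 * π * σ2) ^ (-(d : ℝ) / 2) * rexp (-(2 * σ2)⁻¹ * ‖x‖ ^ 2) := by
  rw [gaussianDensity, neg_mul, ← div_eq_inv_mul, neg_div (2 * σ2)]

lemma gaussianDensity_nonneg (hσ : 0 < σ2) (x : E) : 0 ≤ gaussianDensity σ2 x := by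
  unfold gaussianDensity; positivity

@[fun_prop]
lemma continuous_gaussianDensity (σ2 : ℝ) : Continuous (gaussianDensity (d := d) σ2) := by
  unfold gaussianDensity; fun_prop

lemma gaussian_eq_withDensity (m : E) :
    gaussian d m σ2 = volume.withDensity fun x => ENNReal.ofReal (gaussianDensity σ2 (x - m)) :=
  rfl

lemma integral_gaussianDensity (hσ : 0 < σ2) : ∫ x : E, gaussianDensity σ2 x = 1 := by
  simp_rw [gaussianDensity_eq, integral_const_mul]
  rw [GaussianFourier.integral_rexp_neg_mul_sq_norm (by positivity), finrank_euclideanSpace_fin,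
    div_inv_eq_mul, mul_left_comm, ← mul_assoc, ← rpow_add (by positivity), neg_div, neg_add_cancel, rpow_zero]

lemma integrable_gaussianDensity (hσ : 0 < σ2) : Integrable (gaussianDensity (d := d) σ2) := by
  simp_rw [funext (gaussianDensity_eq σ2)]
  exact (integrable_exp_neg_mul_sq_norm (by positivity)).const_mul _

lemma integrable_gaussianDensity_mul_inner (hσ : 0 < σ2) (w : E) :
    Integrable fun x => gaussianDensity σ2 x * ⟪w, x⟫ := by
  simp_rw [gaussianDensity_eq, mul_right_comm _ _ ⟪w, _⟫, mul_assoc]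
  exact (integrable_inner_mul_exp_neg_mul_sq_norm (by positivity) w).const_mul _

lemma integral_gaussianDensity_mul_inner (w : E) : ∫ x, gaussianDensity σ2 x * ⟪w, x⟫ = 0 := by
  simp_rw [gaussianDensity_eq, mul_right_comm _ _ ⟪w, _⟫, mul_assoc, integral_const_mul,
    integral_inner_mul_exp_neg_mul_sq_norm, mul_zero]

lemma integral_gaussian_eq (hσ : 0 < σ2) (m : E) (g : E → ℝ) :
    ∫ x, g x ∂gaussian d m σ2 = ∫ y, gaussianDensity σ2 y * g (y + m) := by
  rw [gaussian_eq_withDensity, integral_withDensity_eq_integral_toReal_smul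
    (by fun_prop) (ae_of_all _ fun _ => ENNReal.ofReal_lt_top),
    ← integral_add_right_eq_self _ m]
  simp [ENNReal.toReal_ofReal (gaussianDensity_nonneg hσ _)]

lemma Integrable.of_gaussianDensity_mul (hσ : 0 < σ2) {m : E} {g : E → ℝ}
    (hg : Integrable fun y => gaussianDensity σ2 y * g (y + m)) :
    Integrable g (gaussian d m σ2) := by
  rw [gaussian_eq_withDensity, integrable_withDensity_iff (by fun_prop)
    (ae_of_all _ fun _ => ENNReal.ofReal_lt_top)]
  refine (hg.comp_sub_right m).congr (ae_of_all _ fun x => ?_)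
  simp [ENNReal.toReal_ofReal (gaussianDensity_nonneg hσ _), mul_comm]

lemma isProbabilityMeasure_gaussian (hσ : 0 < σ2) (m : E) :
    IsProbabilityMeasure (gaussian d m σ2) := by
  have h := integral_gaussian_eq hσ m 1
  simp only [Pi.one_apply, mul_one, integral_gaussianDensity hσ, integral_const, smul_eq_mul] at h
  exact ⟨(ENNReal.toReal_eq_one_iff _).mp h⟩

lemma gaussianDensity_mul_sq_norm_sub_sub (y m₁ m₂ : E) :
    gaussianDensity σ2 y * ((‖y + m₁ - m₂‖ ^ 2 - ‖y + m₁ - m₁‖ ^ 2) / (2 * σ2)) =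
      σ2⁻¹ * (gaussianDensity σ2 y * ⟪m₁ - m₂, y⟫) +
        ‖m₁ - m₂‖ ^ 2 / (2 * σ2) * gaussianDensity σ2 y := by
  rw [add_sub_assoc, add_sub_cancel_right, norm_add_sq_real, real_inner_comm]
  ring

lemma integrable_sq_norm_sub_sub_gaussian (hσ : 0 < σ2) (m₁ m₂ : E) :
    Integrable (fun x => (‖x - m₂‖ ^ 2 - ‖x - m₁‖ ^ 2) / (2 * σ2)) (gaussian d m₁ σ2) := by
  refine Integrable.of_gaussianDensity_mul hσ ?_
  simp_rw [gaussianDensity_mul_sq_norm_sub_sub]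
  exact ((integrable_gaussianDensity_mul_inner hσ _).const_mul _).add
    ((integrable_gaussianDensity hσ).const_mul _)

lemma integral_sq_norm_sub_sub_gaussian (hσ : 0 < σ2) (m₁ m₂ : E) :
    ∫ x, (‖x - m₂‖ ^ 2 - ‖x - m₁‖ ^ 2) / (2 * σ2) ∂gaussian d m₁ σ2 =
      ‖m₁ - m₂‖ ^ 2 / (2 * σ2) := by
  rw [integral_gaussian_eq hσ]
  simp_rw [gaussianDensity_mul_sq_norm_sub_sub]
  rw [integral_add ((integrable_gaussianDensity_mul_inner hσ _).const_mul _)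
      ((integrable_gaussianDensity hσ).const_mul _), integral_const_mul, integral_const_mul,
    integral_gaussianDensity_mul_inner, integral_gaussianDensity hσ]
  ring

lemma gaussian_eq_withDensity_gaussian (m₁ m₂ : E) :
    gaussian d m₁ σ2 = (gaussian d m₂ σ2).withDensity
      fun x => ENNReal.ofReal (rexp ((‖x - m₂‖ ^ 2 - ‖x - m₁‖ ^ 2) / (2 * σ2))) := by
  rw [gaussian, gaussian, ← withDensity_mul _ (by fun_prop) (by fun_prop)]
  congr 1 with x
  rw [Pi.mul_apply, ← ENNReal.ofReal_mul' (exp_pos _).le, mul_assoc _ (rexp _), ← exp_add]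
  congr 3
  ring

lemma gaussian_absolutelyContinuous (m₁ m₂ : E) : gaussian d m₁ σ2 ≪ gaussian d m₂ σ2 := by
  rw [gaussian_eq_withDensity_gaussian m₁ m₂]
  exact withDensity_absolutelyContinuous _ _

lemma llr_gaussian (hσ : 0 < σ2) (m₁ m₂ : E) :
    llr (gaussian d m₁ σ2) (gaussian d m₂ σ2) =ᵐ[gaussian d m₁ σ2]
      fun x => (‖x - m₂‖ ^ 2 - ‖x - m₁‖ ^ 2) / (2 * σ2) := by
  have := isProbabilityMeasure_gaussian hσ m₂
  have h := Measure.rnDeriv_withDensity (gaussian d m₂ σ2)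
    (f := fun x => ENNReal.ofReal (rexp ((‖x - m₂‖ ^ 2 - ‖x - m₁‖ ^ 2) / (2 * σ2)))) (by fun_prop)
  rw [← gaussian_eq_withDensity_gaussian] at h
  filter_upwards [(gaussian_absolutelyContinuous m₁ m₂).ae_le h] with x hx
  simp only [llr_def]
  rw [hx, ENNReal.toReal_ofReal (exp_pos _).le, log_exp]

lemma integrable_llr_gaussian (hσ : 0 < σ2) (m₁ m₂ : E) :
    Integrable (llr (gaussian d m₁ σ2) (gaussian d m₂ σ2)) (gaussian d m₁ σ2) :=
  (integrable_sq_norm_sub_sub_gaussian hσ m₁ m₂).congr (llr_gaussian hσ m₁ m₂).symm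

lemma KLdiv_gaussian (hσ : 0 < σ2) (m₁ m₂ : E) :
    KLdiv (gaussian d m₁ σ2) (gaussian d m₂ σ2) = ‖m₁ - m₂‖ ^ 2 / (2 * σ2) :=
  (integral_congr_ae (llr_gaussian hσ m₁ m₂)).trans (integral_sq_norm_sub_sub_gaussian hσ m₁ m₂)

end Gaussian

section NoiseSchedule

variable {β : ℕ → ℝ}

lemma prod_one_sub_pos (hβ : ∀ t, β t ∈ Set.Ioo 0 1) (T : ℕ) :
    0 < ∏ t ∈ Finset.Icc 1 T, (1 - β t) :=
  Finset.prod_pos fun t _ => sub_pos.mpr (hβ t).2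

lemma strictAnti_prod_one_sub (hβ : ∀ t, β t ∈ Set.Ioo 0 1) :
    StrictAnti fun T => ∏ t ∈ Finset.Icc 1 T, (1 - β t) := by
  refine strictAnti_nat_of_succ_lt fun T => ?_
  rw [Finset.prod_Icc_succ_top (by omega)]
  exact mul_lt_of_lt_one_right (prod_one_sub_pos hβ T) (by linarith [(hβ (T + 1)).1])

end NoiseSchedule

lemma strictMonoOn_mul_div_two_mul_one_sub {c : ℝ} (hc : 0 < c) :
    StrictMonoOn (fun x : ℝ => x * c / (2 * (1 - x))) (Set.Iio 1) := by
  intro x hx y hy hxy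
  simp only [Set.mem_Iio] at hx hy
  rw [div_lt_div_iff₀ (by linarith) (by linarith)]
  nlinarith

theorem stmt8_general (d : ℕ) (β : ℕ → ℝ) (hβ : ∀ t, β t ∈ Set.Ioo (0 : ℝ) 1)
    (ᾱ : ℕ → ℝ) (hᾱ : ∀ T, ᾱ T = ∏ t ∈ Finset.Icc 1 T, (1 - β t))
    (x₀ x₀' : EuclideanSpace ℝ (Fin d)) (hx : x₀ ≠ x₀')
    {Y : Type*} [MeasurableSpace Y]
    (κ : Kernel (EuclideanSpace ℝ (Fin d)) Y) [IsMarkovKernel κ] :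
    (∀ T : ℕ, 1 ≤ T →
      KLdiv ((gaussian d (Real.sqrt (ᾱ T) • x₀) (1 - ᾱ T)).bind κ)
          ((gaussian d (Real.sqrt (ᾱ T) • x₀') (1 - ᾱ T)).bind κ) ≤
        ᾱ T * ‖x₀ - x₀'‖ ^ 2 / (2 * (1 - ᾱ T))) ∧
    StrictAntiOn (fun T : ℕ => ᾱ T * ‖x₀ - x₀'‖ ^ 2 / (2 * (1 - ᾱ T))) (Set.Ici 1) := by
  have hᾱ_pos (T : ℕ) : 0 < ᾱ T := hᾱ T ▸ prod_one_sub_pos hβ T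
  have hᾱ_anti : StrictAnti ᾱ := funext hᾱ ▸ strictAnti_prod_one_sub hβ
  have hᾱ_lt_one (T : ℕ) (hT : T ∈ Set.Ici 1) : ᾱ T < 1 := by
    simpa [hᾱ 0] using hᾱ_anti (Nat.lt_of_lt_of_le Nat.zero_lt_one hT)
  refine ⟨fun T hT => ?_, ?_⟩
  · have hσ : 0 < 1 - ᾱ T := sub_pos.mpr (hᾱ_lt_one T hT)
    have := isProbabilityMeasure_gaussian hσ (√(ᾱ T) • x₀)
    have := isProbabilityMeasure_gaussian hσ (√(ᾱ T) • x₀')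
    refine (KLdiv_bind_le (gaussian_absolutelyContinuous _ _)
      (integrable_llr_gaussian hσ _ _) κ).trans_eq ?_
    rw [KLdiv_gaussian hσ, ← smul_sub, norm_smul, mul_pow, norm_of_nonneg (sqrt_nonneg _),
      sq_sqrt (hᾱ_pos T).le]
  · have hc : 0 < ‖x₀ - x₀'‖ ^ 2 := pow_pos (norm_pos_iff.mpr (sub_ne_zero.mpr hx)) 2
    exact (strictMonoOn_mul_div_two_mul_one_sub hc).comp_strictAntiOn
      (hᾱ_anti.strictAntiOn _) hᾱ_lt_one

theorem stmt8 (d : ℕ) (hd : 1 ≤ d) (β : ℕ → ℝ) (hβ : ∀ t, β t ∈ Set.Ioo (0 : ℝ) 1)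
    (ᾱ : ℕ → ℝ) (hᾱ : ∀ T, ᾱ T = ∏ t ∈ Finset.Icc 1 T, (1 - β t))
    (x₀ x₀' : EuclideanSpace ℝ (Fin d)) (hx : x₀ ≠ x₀')
    {Y : Type*} [MeasurableSpace Y]
    (κ : Kernel (EuclideanSpace ℝ (Fin d)) Y) [IsMarkovKernel κ] :
    (∀ T : ℕ, 1 ≤ T →
      KLdiv ((gaussian d (Real.sqrt (ᾱ T) • x₀) (1 - ᾱ T)).bind κ)
          ((gaussian d (Real.sqrt (ᾱ T) • x₀') (1 - ᾱ T)).bind κ) ≤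
        ᾱ T * ‖x₀ - x₀'‖ ^ 2 / (2 * (1 - ᾱ T))) ∧
    StrictAntiOn (fun T : ℕ => ᾱ T * ‖x₀ - x₀'‖ ^ 2 / (2 * (1 - ᾱ T))) (Set.Ici 1) :=
  stmt8_general d β hβ ᾱ hᾱ x₀ x₀' hx κ
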